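/- arXiv:1911.00917 — 2 statements merged into one kernel-verified Lean document; each statement's English description precedes it below -/
import Mathlib

section
/- Let 0 ≤ γ < δ < α ≤ n and let f ∈ L¹_loc(ℝⁿ) be nonnegative. Then for all x ∈ ℝⁿ, I_δ f(x) ≤ C [M_α f(x)]^{(δ−γ)/(α−γ)} [M_γ f(x)]^{1−(δ−γ)/(α−γ)}, where C depends only on n, α, β, γ. -/
open MeasureTheory Metric Set ENNReal
noncomputable section

/-- Euclidean space ℝⁿ. -/
abbrev En (n : ℕ) := EuclideanSpace ℝ (Fin n)

/-- Riesz potential of order `δ` of a nonnegative function (Lebesgue measure). -/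
def rieszPot (n : ℕ) (δ : ℝ) (f : En n → ℝ≥0∞) (x : En n) : ℝ≥0∞ :=
  ∫⁻ y, ENNReal.ofReal (‖x - y‖ ^ (δ - (n : ℝ))) * f y

/-- Riesz potential of a real-valued function (Bochner integral, Lebesgue measure). -/
def rieszR (n : ℕ) (δ : ℝ) (f : En n → ℝ) (x : En n) : ℝ :=
  ∫ y, ‖x - y‖ ^ (δ - (n : ℝ)) * f y

/-- Fractional maximal function of order `s` (Lebesgue measure). -/
def fracMax (n : ℕ) (s : ℝ) (f : En n → ℝ≥0∞) (x : En n) : ℝ≥0∞ :=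
  ⨆ (r : ℝ) (_ : 0 < r), ENNReal.ofReal (r ^ (s - (n : ℝ))) * ∫⁻ y in ball x r, f y

/-- `x` lies in the support of the measure `μ`. -/
def memSupport {n : ℕ} (μ : Measure (En n)) (x : En n) : Prop :=
  ∀ r : ℝ, 0 < r → 0 < μ (ball x r)

/-- The growth constant `⟦μ⟧_β = sup_{x ∈ spt μ, r>0} r^{-β} μ(B(x,r))`. -/
def growthConst (n : ℕ) (β : ℝ) (μ : Measure (En n)) : ℝ≥0∞ :=
  ⨆ (x : En n) (_ : memSupport μ x) (r : ℝ) (_ : 0 < r),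
    ENNReal.ofReal (r ^ (-β)) * μ (ball x r)

/-- Distribution function of `f` with respect to `μ`. -/
def distFn {α : Type*} [MeasurableSpace α] (μ : Measure α) (f : α → ℝ≥0∞) (s : ℝ≥0∞) : ℝ≥0∞ :=
  μ {x | s < f x}

/-- Decreasing rearrangement of `f` with respect to `μ`. -/
def rearr {α : Type*} [MeasurableSpace α] (μ : Measure α) (f : α → ℝ≥0∞) (t : ℝ≥0∞) : ℝ≥0∞ :=
  sInf {s : ℝ≥0∞ | distFn μ f s ≤ t}

/-- Lorentz quasinorm `‖f‖_{L^{p,k}(μ)}`, with the usual sup modification for `k = ∞`. -/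
def lorentzNorm {α : Type*} [MeasurableSpace α] (μ : Measure α) (p : ℝ) (k : ℝ≥0∞)
    (f : α → ℝ≥0∞) : ℝ≥0∞ :=
  if k = ∞ then
    ⨆ (t : ℝ) (_ : 0 < t ∧ ENNReal.ofReal t < μ Set.univ),
      ENNReal.ofReal (t ^ (1 / p)) * rearr μ f (ENNReal.ofReal t)
  else
    (ENNReal.ofReal (k.toReal / p) *
      ∫⁻ t in {t : ℝ | 0 < t ∧ ENNReal.ofReal t < μ Set.univ},
        (ENNReal.ofReal (t ^ (1 / p)) * rearr μ f (ENNReal.ofReal t)) ^ k.toReal /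
          ENNReal.ofReal t) ^ (1 / k.toReal)

/-- Lorentz quasinorm of a real-valued function. -/
def lorentzNormR {α : Type*} [MeasurableSpace α] (μ : Measure α) (p : ℝ) (k : ℝ≥0∞)
    (f : α → ℝ) : ℝ≥0∞ :=
  lorentzNorm μ p k (fun x => (‖f x‖₊ : ℝ≥0∞))

/-- Morrey–Lorentz norm `‖f‖_{M^λ_{p,l}}` with Hausdorff-dimension parameter `β`. -/
def mlNorm {n : ℕ} (μ : Measure (En n)) (β p lam : ℝ) (l : ℝ≥0∞) (f : En n → ℝ≥0∞) : ℝ≥0∞ :=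
  ⨆ (x : En n) (_ : memSupport μ x) (R : ℝ) (_ : 0 < R),
    ENNReal.ofReal (R ^ (-(β * (1 / p - 1 / lam)))) *
      lorentzNorm (μ.restrict (ball x R)) p l f

/-- Morrey–Lorentz norm of a real-valued function. -/
def mlNormR {n : ℕ} (μ : Measure (En n)) (β p lam : ℝ) (l : ℝ≥0∞) (f : En n → ℝ) : ℝ≥0∞ :=
  mlNorm μ β p lam l (fun x => (‖f x‖₊ : ℝ≥0∞))

/-- Centered sharp maximal function of `g` with respect to `μ` and exponent `β`. -/
def sharpMaxC (n : ℕ) (β : ℝ) (μ : Measure (En n)) (g : En n → ℝ) (x₀ : En n) : ℝ≥0∞ :=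
  ⨆ (r : ℝ) (_ : 0 < r),
    ENNReal.ofReal (r ^ (-β)) *
      ∫⁻ x in ball x₀ r,
        ENNReal.ofReal |g x - (μ (ball x₀ r)).toReal⁻¹ * ∫ y in ball x₀ r, g y ∂μ| ∂μ

/-- The cube with center `c` and half side-length `h`. -/
def cube {n : ℕ} (c : En n) (h : ℝ) : Set (En n) := {y | ∀ i, |y i - c i| ≤ h}

/-- Uncentered sharp maximal function (sup over cubes containing `x`) w.r.t. `μ`. -/
def sharpMaxU {n : ℕ} (μ : Measure (En n)) (g : En n → ℝ) (x : En n) : ℝ≥0∞ :=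
  ⨆ (c : En n) (h : ℝ) (_ : 0 < h) (_ : x ∈ cube c h),
    (μ (cube c h))⁻¹ *
      ∫⁻ y in cube c h,
        ENNReal.ofReal |g y - (μ (cube c h)).toReal⁻¹ * ∫ z in cube c h, g z ∂μ| ∂μ

/-- Fourier transform of a measure: `μ̂(ξ) = ∫ e^{-2πi x·ξ} dμ(x)`. -/
def fourierMeasure (n : ℕ) (μ : Measure (En n)) (ξ : En n) : ℂ :=
  ∫ x, Complex.exp (-2 * Real.pi * Complex.I * ((inner ℝ x ξ : ℝ) : ℂ)) ∂μ

/-- Partial derivative in the `i`-th coordinate direction. -/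
def pderivE {n : ℕ} (i : Fin n) (f : En n → ℝ) : En n → ℝ :=
  fun x => fderiv ℝ f x (EuclideanSpace.single i 1)

/-- Iterated partial derivative `D^α` given as a list of coordinate directions. -/
def pdList {n : ℕ} : List (Fin n) → (En n → ℝ) → (En n → ℝ)
  | [], f => f
  | i :: L, f => pderivE i (pdList L f)

/-- Anisotropic scaling of the last coordinate by the factor `c`. -/
def lastScale {n : ℕ} (c : ℝ) (x : En (n + 1)) : En (n + 1) :=
  (WithLp.equiv 2 (Fin (n + 1) → ℝ)).symm
    (fun i => if i = Fin.last n then c * x i else x i)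

/-- The open upper half-space `ℝⁿ₊` in `ℝ^{n+1}`. -/
def halfSpace (n : ℕ) : Set (En (n + 1)) := {x | 0 < x (Fin.last n)}

/-- The Calderón–Stein extension operator on the half-space. -/
def csExt {n : ℕ} (ψ : ℝ → ℝ) (f : En (n + 1) → ℝ) (x : En (n + 1)) : ℝ :=
  if 0 ≤ x (Fin.last n) then f x
  else ∫ s in Set.Ioi (1 : ℝ), f (lastScale (1 - 2 * s) x) * ψ s

/-- Embedding of the boundary `ℝⁿ = ∂ℝ^{n+1}₊` into `ℝ^{n+1}`, appending a `0`. -/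
def bdEmbed {n : ℕ} (x' : En n) : En (n + 1) :=
  (WithLp.equiv 2 (Fin (n + 1) → ℝ)).symm (Fin.snoc (fun j => x' j) 0)

/-- The maximal rearrangement `f♮(t) = t⁻¹ ∫₀ᵗ f*(s) ds`. -/
def natRearr {α : Type*} [MeasurableSpace α] (μ : Measure α) (f : α → ℝ≥0∞) (t : ℝ) : ℝ≥0∞ :=
  (ENNReal.ofReal t)⁻¹ * ∫⁻ s in Set.Ioc (0 : ℝ) t, rearr μ f (ENNReal.ofReal s)

/-- Lorentz norm built from the maximal rearrangement `f♮`. -/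
def lorentzNormNat {α : Type*} [MeasurableSpace α] (μ : Measure α) (p : ℝ) (k : ℝ≥0∞)
    (f : α → ℝ≥0∞) : ℝ≥0∞ :=
  if k = ∞ then
    ⨆ (t : ℝ) (_ : 0 < t ∧ ENNReal.ofReal t < μ Set.univ),
      ENNReal.ofReal (t ^ (1 / p)) * natRearr μ f t
  else
    (ENNReal.ofReal (k.toReal / p) *
      ∫⁻ t in {t : ℝ | 0 < t ∧ ENNReal.ofReal t < μ Set.univ},
        (ENNReal.ofReal (t ^ (1 / p)) * natRearr μ f t) ^ k.toReal /
          ENNReal.ofReal t) ^ (1 / k.toReal)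

/-!
Since `|x - y|^(δ - n) = (n - δ) ∫_{|x - y|}^∞ r^(δ - n - 1) dr`, Tonelli gives
`I_δ f(x) ≤ (n - δ) ∫_0^∞ r^(δ - n - 1) ∫_{B(x,r)} f dr`. Bounding the ball integral by
`r^(n - γ) M_γ f(x)` for `r ≤ R` and by `r^(n - α) M_α f(x)` for `r > R` yields
`I_δ f(x) ≲ R^(δ - γ) M_γ f(x) + R^(δ - α) M_α f(x)`, and the choice
`R^(α - γ) = M_α f(x) / M_γ f(x)` balances the two terms.
If one of the maximal functions vanishes at `x`, every ball integral vanishes, and so does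
`I_δ f(x)`.
-/

theorem lintegral_Ioc_rpow {p R : ℝ} (hp : -1 < p) (hR : 0 < R) :
    ∫⁻ r in Ioc 0 R, ENNReal.ofReal (r ^ p) = ENNReal.ofReal (R ^ (p + 1) / (p + 1)) := by
  have hint : IntegrableOn (fun r : ℝ => r ^ p) (Ioc 0 R) := by
    rw [← intervalIntegrable_iff_integrableOn_Ioc_of_le hR.le]
    exact intervalIntegral.intervalIntegrable_rpow' hp
  rw [← ofReal_integral_eq_lintegral_ofReal hint
      ((ae_restrict_mem measurableSet_Ioc).mono fun r hr => Real.rpow_nonneg hr.1.le p),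
    ← intervalIntegral.integral_of_le hR.le, integral_rpow (Or.inl hp),
    Real.zero_rpow (by linarith), sub_zero]

theorem lintegral_Ioi_rpow {p R : ℝ} (hp : p < -1) (hR : 0 < R) :
    ∫⁻ r in Ioi R, ENNReal.ofReal (r ^ p) = ENNReal.ofReal (-R ^ (p + 1) / (p + 1)) := by
  rw [← ofReal_integral_eq_lintegral_ofReal (integrableOn_Ioi_rpow_of_lt hp hR)
      ((ae_restrict_mem measurableSet_Ioi).mono fun r hr => Real.rpow_nonneg (hR.trans hr).le p),
    integral_Ioi_rpow_of_lt hp hR]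

theorem ofReal_rpow_le_lintegral_Ioi {q a : ℝ} (hq : q < 0) (ha : 0 ≤ a) :
    ENNReal.ofReal (a ^ q) ≤
      ENNReal.ofReal (-q) * ∫⁻ r in Ioi a, ENNReal.ofReal (r ^ (q - 1)) := by
  rcases ha.eq_or_lt with rfl | ha
  · simp [Real.zero_rpow hq.ne]
  rw [lintegral_Ioi_rpow (by linarith) ha, ← ENNReal.ofReal_mul (by linarith), sub_add_cancel,
    neg_div, mul_neg, ← neg_mul, neg_neg, mul_div_cancel₀ _ hq.ne]

theorem ENNReal.div_rpow_mul_self {A G : ℝ≥0∞} (hG0 : G ≠ 0) (hG : G ≠ ⊤) {p : ℝ}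
    (hp : 0 ≤ p) :
    (A / G) ^ p * G = A ^ p * G ^ (1 - p) := by
  rw [div_eq_mul_inv, ENNReal.mul_rpow_of_nonneg _ _ hp, ENNReal.inv_rpow, ← ENNReal.rpow_neg,
    mul_assoc, sub_eq_neg_add, ENNReal.rpow_add _ _ hG0 hG, ENNReal.rpow_one]

theorem ENNReal.le_mul_rpow_mul_rpow_of_forall_le {I A G c₁ c₂ : ℝ≥0∞} {a b : ℝ}
    (ha : 0 < a) (hb : 0 < b) (hA0 : A ≠ 0) (hG0 : G ≠ 0)
    (h : ∀ R : ℝ, 0 < R →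
      I ≤ c₁ * ENNReal.ofReal (R ^ a) * G + c₂ * ENNReal.ofReal (R ^ (-b)) * A) :
    I ≤ (c₁ + c₂) * A ^ (a / (a + b)) * G ^ (1 - a / (a + b)) := by
  have hq : 1 - a / (a + b) = b / (a + b) := by field_simp; ring
  set p := a / (a + b)
  have hp : 0 < p := by positivity
  have hq0 : 0 < 1 - p := by rw [hq]; positivity
  rcases eq_or_ne (c₁ + c₂) 0 with hc | hc
  · obtain ⟨rfl, rfl⟩ := add_eq_zero.1 hc
    simpa using h 1 one_pos
  by_cases hA : A = ⊤
  · rw [hA, ENNReal.top_rpow_of_pos hp, ENNReal.mul_top hc,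
      ENNReal.top_mul (ENNReal.rpow_pos_of_nonneg (pos_iff_ne_zero.2 hG0) hq0.le).ne']
    exact le_top
  by_cases hG : G = ⊤
  · rw [hG, ENNReal.top_rpow_of_pos hq0,
      ENNReal.mul_top (mul_ne_zero hc (ENNReal.rpow_pos (pos_iff_ne_zero.2 hA0) hA).ne')]
    exact le_top
  have hAG0 : A / G ≠ 0 := ENNReal.div_ne_zero.2 ⟨hA0, hG⟩
  have hAG : A / G ≠ ⊤ := ENNReal.div_ne_top hA hG0
  -- `Q ^ (a + b) = A / G` makes the two terms equal
  set Q := (A / G) ^ (1 / (a + b))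
  have hQ0 : Q ≠ 0 := (ENNReal.rpow_pos (pos_iff_ne_zero.2 hAG0) hAG).ne'
  have hQ : Q ≠ ⊤ := ENNReal.rpow_ne_top_of_nonneg (by positivity) hAG
  have hpow (e : ℝ) : ENNReal.ofReal (Q.toReal ^ e) = (A / G) ^ (e / (a + b)) := by
    rw [← ENNReal.ofReal_rpow_of_pos (ENNReal.toReal_pos hQ0 hQ), ENNReal.ofReal_toReal hQ,
      ← ENNReal.rpow_mul, one_div_mul_eq_div]
  have hnear : (A / G) ^ (a / (a + b)) * G = A ^ p * G ^ (1 - p) :=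
    ENNReal.div_rpow_mul_self hG0 hG hp.le
  have hfar : (A / G) ^ (-b / (a + b)) * A = A ^ p * G ^ (1 - p) := by
    rw [neg_div, ← hq, ENNReal.rpow_neg, ← ENNReal.inv_rpow,
      ENNReal.inv_div (Or.inl hG) (Or.inl hG0), ENNReal.div_rpow_mul_self hA0 hA hq0.le, mul_comm,
      _root_.sub_sub_cancel]
  calc I
      ≤ c₁ * ENNReal.ofReal (Q.toReal ^ a) * G + c₂ * ENNReal.ofReal (Q.toReal ^ (-b)) * A :=
        h _ (ENNReal.toReal_pos hQ0 hQ)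
    _ = (c₁ + c₂) * A ^ p * G ^ (1 - p) := by
        rw [hpow, hpow, mul_assoc, mul_assoc, hnear, hfar, ← add_mul, mul_assoc]

section FractionalMaximal

variable {n : ℕ} {f : En n → ℝ≥0∞} {x : En n}

theorem lintegral_ball_le_fracMax (s : ℝ) {r : ℝ} (hr : 0 < r) :
    ∫⁻ y in ball x r, f y ≤ ENNReal.ofReal (r ^ ((n : ℝ) - s)) * fracMax n s f x := by
  calc ∫⁻ y in ball x r, f y
      = ENNReal.ofReal (r ^ ((n : ℝ) - s)) *
          (ENNReal.ofReal (r ^ (s - n)) * ∫⁻ y in ball x r, f y) := by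
        rw [← mul_assoc, ← ENNReal.ofReal_mul (by positivity), ← Real.rpow_add hr,
          sub_add_sub_cancel, sub_self, Real.rpow_zero, ENNReal.ofReal_one, one_mul]
    _ ≤ _ := by
        gcongr
        exact le_iSup₂ (f := fun r (_ : 0 < r) =>
          ENNReal.ofReal (r ^ (s - n)) * ∫⁻ y in ball x r, f y) r hr

theorem fracMax_eq_zero_iff {s : ℝ} :
    fracMax n s f x = 0 ↔ ∀ r : ℝ, 0 < r → ∫⁻ y in ball x r, f y = 0 := by
  simp only [fracMax, ENNReal.iSup_eq_zero]
  refine forall₂_congr fun r hr => ?_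
  simp [(Real.rpow_pos_of_pos hr _).not_ge]

theorem setLIntegral_rpow_mul_lintegral_ball_le (c s : ℝ) {S : Set ℝ} (hS : S ⊆ Ioi 0) :
    ∫⁻ r in S, ENNReal.ofReal (r ^ (c - n)) * ∫⁻ y in ball x r, f y ≤
      (∫⁻ r in S, ENNReal.ofReal (r ^ (c - s))) * fracMax n s f x := by
  have hK : Measurable fun r : ℝ => ENNReal.ofReal (r ^ (c - s)) := by fun_prop
  rw [← lintegral_mul_const _ hK]
  refine setLIntegral_mono (hK.mul_const _) fun r hr => ?_
  have hr : 0 < r := hS hr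
  calc ENNReal.ofReal (r ^ (c - n)) * ∫⁻ y in ball x r, f y
      ≤ ENNReal.ofReal (r ^ (c - n)) *
          (ENNReal.ofReal (r ^ ((n : ℝ) - s)) * fracMax n s f x) := by
        gcongr
        exact lintegral_ball_le_fracMax s hr
    _ = ENNReal.ofReal (r ^ (c - s)) * fracMax n s f x := by
        rw [← mul_assoc, ← ENNReal.ofReal_mul (by positivity), ← Real.rpow_add hr,
          sub_add_sub_cancel]

end FractionalMaximal

section RieszPotential

variable {n : ℕ} {δ : ℝ} {f : En n → ℝ≥0∞} {x : En n}

theorem rieszPot_le_lintegral_ball (hδ : δ < n) (hf : Measurable f) :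
    rieszPot n δ f x ≤ ENNReal.ofReal (n - δ) *
      ∫⁻ r in Ioi 0, ENNReal.ofReal (r ^ (δ - 1 - n)) * ∫⁻ y in ball x r, f y := by
  set K : ℝ → ℝ≥0∞ := fun r => ENNReal.ofReal (r ^ (δ - 1 - n))
  have hK : Measurable K := (measurable_id.pow_const _).ennreal_ofReal
  set F : En n → ℝ → ℝ≥0∞ := fun y r =>
    {q : En n × ℝ | dist q.1 x < q.2}.indicator (fun q => K q.2 * f q.1) (y, r)
  have hF : Measurable (Function.uncurry F) :=
    ((hK.comp measurable_snd).mul (hf.comp measurable_fst)).indicator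
      (measurableSet_lt (by fun_prop) measurable_snd)
  have hF_int_r (y : En n) :
      ∫⁻ r in Ioi 0, F y r = (∫⁻ r in Ioi (dist y x), K r) * f y := by
    have hIoi : Ioi (dist y x) ∩ Ioi 0 = Ioi (dist y x) := by
      rw [Ioi_inter_Ioi, sup_of_le_left dist_nonneg]
    calc ∫⁻ r in Ioi 0, F y r
        = ∫⁻ r in Ioi 0, (Ioi (dist y x)).indicator (fun r => K r * f y) r := rfl
      _ = _ := by
        rw [lintegral_indicator measurableSet_Ioi, Measure.restrict_restrict measurableSet_Ioi,
          hIoi, lintegral_mul_const _ hK]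
  have hF_int_y (r : ℝ) : ∫⁻ y, F y r = K r * ∫⁻ y in ball x r, f y := by
    calc ∫⁻ y, F y r = ∫⁻ y, (ball x r).indicator (fun y => K r * f y) y := rfl
      _ = _ := by rw [lintegral_indicator measurableSet_ball, lintegral_const_mul _ hf]
  calc rieszPot n δ f x
      ≤ ∫⁻ y, ENNReal.ofReal (n - δ) * ((∫⁻ r in Ioi (dist y x), K r) * f y) := by
        refine lintegral_mono fun y => ?_
        rw [← mul_assoc, dist_comm, dist_eq_norm]
        gcongr
        simpa [K, sub_right_comm] using
          ofReal_rpow_le_lintegral_Ioi (sub_neg.2 hδ) (norm_nonneg (x - y))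
    _ = ENNReal.ofReal (n - δ) * ∫⁻ r in Ioi 0, ∫⁻ y, F y r := by
        simp_rw [← hF_int_r]
        have hF_meas : Measurable fun y => ∫⁻ r in Ioi 0, F y r := hF.lintegral_prod_right'
        rw [lintegral_const_mul _ hF_meas, lintegral_lintegral_swap hF.aemeasurable]
    _ = _ := by simp_rw [hF_int_y]; rfl

theorem lintegral_Ioc_rpow_mul_lintegral_ball_le {γ R : ℝ} (hγδ : γ < δ) (hR : 0 < R) :
    ∫⁻ r in Ioc 0 R, ENNReal.ofReal (r ^ (δ - 1 - n)) * ∫⁻ y in ball x r, f y ≤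
      ENNReal.ofReal (R ^ (δ - γ) / (δ - γ)) * fracMax n γ f x := by
  calc _ ≤ (∫⁻ r in Ioc 0 R, ENNReal.ofReal (r ^ (δ - 1 - γ))) * fracMax n γ f x :=
        setLIntegral_rpow_mul_lintegral_ball_le _ _ fun r hr => hr.1
    _ = _ := by rw [lintegral_Ioc_rpow (by linarith) hR, sub_right_comm, sub_add_cancel]

theorem lintegral_Ioi_rpow_mul_lintegral_ball_le {α R : ℝ} (hδα : δ < α) (hR : 0 < R) :
    ∫⁻ r in Ioi R, ENNReal.ofReal (r ^ (δ - 1 - n)) * ∫⁻ y in ball x r, f y ≤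
      ENNReal.ofReal (R ^ (-(α - δ)) / (α - δ)) * fracMax n α f x := by
  calc _ ≤ (∫⁻ r in Ioi R, ENNReal.ofReal (r ^ (δ - 1 - α))) * fracMax n α f x :=
        setLIntegral_rpow_mul_lintegral_ball_le _ _ fun r hr => hR.trans hr
    _ = _ := by
        rw [lintegral_Ioi_rpow (by linarith) hR, sub_right_comm, sub_add_cancel, ← neg_sub α δ,
          neg_div_neg_eq]

theorem rieszPot_le_fracMax_add_fracMax {γ α R : ℝ} (hγδ : γ < δ) (hδα : δ < α)
    (hδn : δ < n) (hf : Measurable f) (hR : 0 < R) :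
    rieszPot n δ f x ≤
      ENNReal.ofReal ((n - δ) / (δ - γ)) * ENNReal.ofReal (R ^ (δ - γ)) * fracMax n γ f x +
        ENNReal.ofReal ((n - δ) / (α - δ)) * ENNReal.ofReal (R ^ (-(α - δ))) *
          fracMax n α f x := by
  have hcoeff (a t : ℝ) (ha : 0 < a) :
      ENNReal.ofReal (n - δ) * ENNReal.ofReal (R ^ t / a) =
        ENNReal.ofReal ((n - δ) / a) * ENNReal.ofReal (R ^ t) := by
    rw [← ENNReal.ofReal_mul (by linarith), ← ENNReal.ofReal_mul (by positivity)]
    ring_nf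
  calc rieszPot n δ f x
      ≤ ENNReal.ofReal (n - δ) *
          ∫⁻ r in Ioi 0, ENNReal.ofReal (r ^ (δ - 1 - n)) * ∫⁻ y in ball x r, f y :=
        rieszPot_le_lintegral_ball hδn hf
    _ = ENNReal.ofReal (n - δ) *
          ((∫⁻ r in Ioc 0 R, ENNReal.ofReal (r ^ (δ - 1 - n)) * ∫⁻ y in ball x r, f y) +
            ∫⁻ r in Ioi R, ENNReal.ofReal (r ^ (δ - 1 - n)) * ∫⁻ y in ball x r, f y) := by
        rw [← Ioc_union_Ioi_eq_Ioi hR.le,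
          lintegral_union measurableSet_Ioi (Ioc_disjoint_Ioi le_rfl)]
    _ ≤ ENNReal.ofReal (n - δ) *
          (ENNReal.ofReal (R ^ (δ - γ) / (δ - γ)) * fracMax n γ f x +
            ENNReal.ofReal (R ^ (-(α - δ)) / (α - δ)) * fracMax n α f x) := by
        gcongr
        · exact lintegral_Ioc_rpow_mul_lintegral_ball_le hγδ hR
        · exact lintegral_Ioi_rpow_mul_lintegral_ball_le hδα hR
    _ = _ := by
        rw [mul_add, ← mul_assoc, ← mul_assoc, hcoeff _ _ (sub_pos.2 hγδ),
          hcoeff _ _ (sub_pos.2 hδα)]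

theorem rieszPot_eq_zero_of_fracMax_eq_zero {s : ℝ} (hδ : δ < n) (hf : Measurable f)
    (h : fracMax n s f x = 0) : rieszPot n δ f x = 0 := by
  refine le_antisymm ((rieszPot_le_lintegral_ball hδ hf).trans_eq ?_) zero_le
  rw [setLIntegral_congr_fun measurableSet_Ioi fun r hr => by
      rw [fracMax_eq_zero_iff.1 h r hr, mul_zero],
    lintegral_zero, mul_zero]

end RieszPotential

theorem rieszPot_le_fracMax_interpolation_general (n : ℕ) (γ δ α : ℝ) (hγδ : γ < δ)
    (hδα : δ < α) (hαn : α ≤ n) :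
    ∃ C : ℝ, 0 < C ∧ ∀ (f : En n → ℝ≥0∞), Measurable f → ∀ x : En n,
      rieszPot n δ f x ≤
        ENNReal.ofReal C * (fracMax n α f x) ^ ((δ - γ) / (α - γ)) *
          (fracMax n γ f x) ^ (1 - (δ - γ) / (α - γ)) := by
  have hδn : δ < n := hδα.trans_le hαn
  have hc₁ : 0 < (n - δ) / (δ - γ) := div_pos (sub_pos.2 hδn) (sub_pos.2 hγδ)
  have hc₂ : 0 < (n - δ) / (α - δ) := div_pos (sub_pos.2 hδn) (sub_pos.2 hδα)
  refine ⟨(n - δ) / (δ - γ) + (n - δ) / (α - δ), add_pos hc₁ hc₂, fun f hf x => ?_⟩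
  rcases eq_or_ne (fracMax n γ f x) 0 with hG | hG
  · simp [rieszPot_eq_zero_of_fracMax_eq_zero hδn hf hG]
  rcases eq_or_ne (fracMax n α f x) 0 with hA | hA
  · simp [rieszPot_eq_zero_of_fracMax_eq_zero hδn hf hA]
  have hαγ : α - γ = (δ - γ) + (α - δ) := by ring
  rw [hαγ, ENNReal.ofReal_add hc₁.le hc₂.le]
  exact ENNReal.le_mul_rpow_mul_rpow_of_forall_le (sub_pos.2 hγδ) (sub_pos.2 hδα) hA hG
    fun R hR => rieszPot_le_fracMax_add_fracMax hγδ hδα hδn hf hR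

/-- pointwise interpolation bound of the Riesz potential by
fractional maximal functions. -/
theorem rieszPot_le_fracMax_interpolation (n : ℕ) (γ δ α : ℝ) (hγ0 : 0 ≤ γ) (hγδ : γ < δ)
    (hδα : δ < α) (hαn : α ≤ n) :
    ∃ C : ℝ, 0 < C ∧ ∀ (f : En n → ℝ≥0∞), Measurable f → ∀ x : En n,
      rieszPot n δ f x ≤
        ENNReal.ofReal C * (fracMax n α f x) ^ ((δ - γ) / (α - γ)) *
          (fracMax n γ f x) ^ (1 - (δ - γ) / (α - γ)) :=
  rieszPot_le_fracMax_interpolation_general n γ δ α hγδ hδα hαn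
end
end

section
/- Let μ be a Radon measure on ℝⁿ with ⟦μ⟧_β = sup_{x∈spt(μ), r>0} r^{−β} μ(B(x,r)) < ∞, where n − α < β ≤ n and 0 < α < n. If f ∈ L¹_loc(ℝⁿ, Lebesgue) and I_α f ∈ L¹_loc(μ), then the centered sharp maximal function satisfies the pointwise bound M̄^♯ I_α f(x) ≤ C ⟦μ⟧_β M_α f(x) for all x ∈ spt(μ). -/
open MeasureTheory Metric Set ENNReal
noncomputable section

/-! Fix `x₀ ∈ spt μ` and a ball `B = B(x₀, r)`. Replacing the mean of `I_α f` over `B` by the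
constant `c = ∫_{|x₀ - y| ≥ 2r} |x₀ - y|^{α-n} f(y) dy` costs a factor `2`, and for `x ∈ B` the
difference `I_α f(x) - c` splits into a local and a far part. The local part
`∫_{B(x₀,2r)} |x - y|^{α-n} |f(y)| dy` is integrated against `μ` by Tonelli: dyadic annuli
around `y` and `μ(B(y,s)) ≲ ⟦μ⟧_β s^β` with `β > n - α` give
`∫_B |x - y|^{α-n} dμ(x) ≲ ⟦μ⟧_β r^{β+α-n}`, while `∫_{B(x₀,2r)} |f| ≤ (2r)^{n-α} M_α f(x₀)`.
In the far part the mean value theorem gives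
`||x - y|^{α-n} - |x₀ - y|^{α-n}| ≲ r |x₀ - y|^{α-n-1}`, and dyadic annuli around `x₀` bound its
integral by `M_α f(x₀)`. If the far integral diverges at `x₀`, it diverges at every `x ∈ B`, and
then `I_α f(x)` and `c` are both the junk value `0` of the Bochner integral. -/

lemma ofReal_rpow_neg_mul_ofReal_rpow {s : ℝ} (hs : 0 < s) (e : ℝ) :
    ENNReal.ofReal (s ^ (-e)) * ENNReal.ofReal (s ^ e) = 1 := by
  rw [← ENNReal.ofReal_mul (by positivity), ← Real.rpow_add hs, neg_add_cancel, Real.rpow_zero,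
    ENNReal.ofReal_one]

lemma le_mul_ofReal_rpow_of_ofReal_rpow_neg_mul_le {s e : ℝ} (hs : 0 < s) {a b : ℝ≥0∞}
    (h : ENNReal.ofReal (s ^ (-e)) * a ≤ b) : a ≤ b * ENNReal.ofReal (s ^ e) :=
  calc a = ENNReal.ofReal (s ^ (-e)) * a * ENNReal.ofReal (s ^ e) := by
        rw [mul_right_comm, ofReal_rpow_neg_mul_ofReal_rpow hs, one_mul]
    _ ≤ b * ENNReal.ofReal (s ^ e) := by gcongr

section DyadicShells

variable {X : Type*} [PseudoMetricSpace X] [MeasurableSpace X]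
  {ν : Measure X} {y : X} {A : ℝ≥0∞} {β γ : ℝ}

lemma setLIntegral_iUnion_rpow_dist_le {a b q : ℝ} (hγ : γ ≤ 0) (ha : 0 < a) (hb : 0 < b)
    (hq : 0 < q) (hqβγ : q ^ (β + γ) < 1)
    (hν : ∀ s, 0 < s → ν (ball y s) ≤ A * ENNReal.ofReal (s ^ β))
    (T : ℕ → Set X) (hT : ∀ j, ∀ x ∈ T j, a * q ^ j ≤ dist x y ∧ dist x y < b * q ^ j) :
    ∫⁻ x in ⋃ j, T j, ENNReal.ofReal (dist x y ^ γ) ∂ν ≤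
      A * ENNReal.ofReal (a ^ γ * b ^ β / (1 - q ^ (β + γ))) := by
  have hshell : ∀ j, ∫⁻ x in T j, ENNReal.ofReal (dist x y ^ γ) ∂ν ≤
      A * ENNReal.ofReal (a ^ γ * b ^ β * (q ^ (β + γ)) ^ j) := fun j => by
    calc ∫⁻ x in T j, ENNReal.ofReal (dist x y ^ γ) ∂ν
        ≤ ∫⁻ _ in T j, ENNReal.ofReal ((a * q ^ j) ^ γ) ∂ν :=
          setLIntegral_mono measurable_const fun x hx => ENNReal.ofReal_le_ofReal
            (Real.rpow_le_rpow_of_nonpos (by positivity) (hT j x hx).1 hγ)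
      _ = ENNReal.ofReal ((a * q ^ j) ^ γ) * ν (T j) := setLIntegral_const _ _
      _ ≤ ENNReal.ofReal ((a * q ^ j) ^ γ) * (A * ENNReal.ofReal ((b * q ^ j) ^ β)) := by
          gcongr
          exact (measure_mono fun x hx => mem_ball.2 (hT j x hx).2).trans (hν _ (by positivity))
      _ = A * ENNReal.ofReal (a ^ γ * b ^ β * (q ^ (β + γ)) ^ j) := by
          rw [mul_left_comm, ← ENNReal.ofReal_mul (by positivity),
            Real.mul_rpow ha.le (by positivity), Real.mul_rpow hb.le (by positivity),
            ← Real.rpow_pow_comm hq.le, ← Real.rpow_pow_comm hq.le, Real.rpow_add hq, mul_pow]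
          ring_nf
  have hsum := (summable_geometric_of_lt_one (by positivity) hqβγ).mul_left (a ^ γ * b ^ β)
  calc _ ≤ ∑' j, ∫⁻ x in T j, ENNReal.ofReal (dist x y ^ γ) ∂ν := lintegral_iUnion_le _ _
    _ ≤ ∑' j, A * ENNReal.ofReal (a ^ γ * b ^ β * (q ^ (β + γ)) ^ j) := ENNReal.tsum_le_tsum hshell
    _ = A * ENNReal.ofReal (a ^ γ * b ^ β / (1 - q ^ (β + γ))) := by
        rw [ENNReal.tsum_mul_left, ← ENNReal.ofReal_tsum_of_nonneg (fun j => by positivity) hsum,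
          tsum_mul_left, tsum_geometric_of_lt_one (by positivity) hqβγ, div_eq_mul_inv]

lemma setLIntegral_ball_rpow_dist_le [OpensMeasurableSpace X] {R : ℝ} (hR : 0 < R) (hγ : γ < 0)
    (hβγ : 0 < β + γ) (hν : ∀ s, 0 < s → ν (ball y s) ≤ A * ENNReal.ofReal (s ^ β)) :
    ∫⁻ x in ball y R, ENNReal.ofReal (dist x y ^ γ) ∂ν ≤
      A * ENNReal.ofReal ((R / 2) ^ γ * (2 * R) ^ β / (1 - 2⁻¹ ^ (β + γ))) := by
  set T : ℕ → Set X := fun j => {x | dist x y ∈ Ioc (R / 2 * 2⁻¹ ^ j) (R * 2⁻¹ ^ j)}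
  have hcover : ball y R ⊆ closedBall y 0 ∪ ⋃ j, T j := by
    intro x hx
    rcases (dist_nonneg (x := x) (y := y)).eq_or_lt with h | h
    · exact Or.inl h.symm.le
    obtain ⟨j, hj₁, hj₂⟩ := exists_nat_pow_near_of_lt_one (div_pos h hR)
      ((div_le_one hR).2 (mem_ball.1 hx).le) (by norm_num : (0:ℝ) < 2⁻¹) (by norm_num)
    refine Or.inr (mem_iUnion.2 ⟨j, ?_, ?_⟩)
    · rw [pow_succ, lt_div_iff₀ hR] at hj₁; linarith
    · rwa [div_le_iff₀ hR, mul_comm] at hj₂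
  -- the centre contributes nothing, since `0 ^ γ = 0` for `γ ≠ 0` in Mathlib
  have hzero : ∫⁻ x in closedBall y 0, ENNReal.ofReal (dist x y ^ γ) ∂ν = 0 :=
    setLIntegral_eq_zero measurableSet_closedBall fun x hx => by
      simp [le_antisymm hx dist_nonneg, Real.zero_rpow hγ.ne]
  have hT : ∀ j, ∀ x ∈ T j, R / 2 * 2⁻¹ ^ j ≤ dist x y ∧ dist x y < 2 * R * 2⁻¹ ^ j :=
    fun j x hx => ⟨hx.1.le, hx.2.trans_lt (by nlinarith [pow_pos (by norm_num : (0:ℝ) < 2⁻¹) j])⟩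
  calc _ ≤ ∫⁻ x in closedBall y 0 ∪ ⋃ j, T j, ENNReal.ofReal (dist x y ^ γ) ∂ν :=
        lintegral_mono_set hcover
    _ ≤ _ := (lintegral_union_le _ _ _).trans (by
        rw [hzero, zero_add]
        exact setLIntegral_iUnion_rpow_dist_le hγ.le (by positivity) (by positivity)
          (by norm_num) (Real.rpow_lt_one (by norm_num) (by norm_num) hβγ) hν T hT)

lemma setLIntegral_compl_ball_rpow_dist_le {R : ℝ} (hR : 0 < R) (hγ : γ ≤ 0)
    (hβγ : β + γ < 0) (hν : ∀ s, 0 < s → ν (ball y s) ≤ A * ENNReal.ofReal (s ^ β)) :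
    ∫⁻ x in (ball y R)ᶜ, ENNReal.ofReal (dist x y ^ γ) ∂ν ≤
      A * ENNReal.ofReal (R ^ γ * (2 * R) ^ β / (1 - 2 ^ (β + γ))) := by
  set T : ℕ → Set X := fun j => {x | dist x y ∈ Ico (R * 2 ^ j) (2 * R * 2 ^ j)}
  have hcover : (ball y R)ᶜ ⊆ ⋃ j, T j := by
    intro x hx
    have hRx : R ≤ dist x y := not_lt.1 hx
    obtain ⟨j, hj₁, hj₂⟩ := exists_nat_pow_near ((one_le_div hR).2 hRx) one_lt_two
    refine mem_iUnion.2 ⟨j, ?_, ?_⟩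
    · rwa [le_div_iff₀ hR, mul_comm] at hj₁
    · rw [pow_succ, div_lt_iff₀ hR] at hj₂; linarith
  exact (lintegral_mono_set hcover).trans <|
    setLIntegral_iUnion_rpow_dist_le hγ hR (by positivity) two_pos
      (Real.rpow_lt_one_of_one_lt_of_neg one_lt_two hβγ) hν T fun j x hx => hx

end DyadicShells

lemma lintegral_ball_setLIntegral_ball_rpow_dist_le {X : Type*} [PseudoMetricSpace X]
    [SecondCountableTopology X] [MeasurableSpace X] [BorelSpace X] {μ ν : Measure X} [SFinite ν]
    {A M : ℝ≥0∞} {β γ r : ℝ} {x₀ : X} (hA : A ≠ ∞) (hγ : γ < 0) (hβγ : 0 < β + γ) (hr : 0 < r)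
    (hμ : ∀ z s, 0 < s → μ (ball z s) ≤ A * ENNReal.ofReal (s ^ β))
    (hν : ν (ball x₀ (2 * r)) ≤ M * ENNReal.ofReal ((2 * r) ^ (-γ))) :
    ∫⁻ x in ball x₀ r, ∫⁻ y in ball x₀ (2 * r), ENNReal.ofReal (dist x y ^ γ) ∂ν ∂μ ≤
      ENNReal.ofReal ((3 / 2) ^ γ * 6 ^ β * 2 ^ (-γ) / (1 - 2⁻¹ ^ (β + γ))) * A * M *
        ENNReal.ofReal (r ^ β) := by
  have : IsFiniteMeasure (μ.restrict (ball x₀ r)) :=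
    isFiniteMeasure_restrict.2 (ne_top_of_le_ne_top (by finiteness) (hμ x₀ r hr))
  have hq : 0 < 1 - (2⁻¹ : ℝ) ^ (β + γ) :=
    sub_pos.2 (Real.rpow_lt_one (by norm_num) (by norm_num) hβγ)
  have hκ : (3 * r / 2) ^ γ * (2 * (3 * r)) ^ β / (1 - 2⁻¹ ^ (β + γ)) * (2 * r) ^ (-γ) =
      (3 / 2) ^ γ * 6 ^ β * 2 ^ (-γ) / (1 - 2⁻¹ ^ (β + γ)) * r ^ β := by
    rw [show 3 * r / 2 = 3 / 2 * r by ring, show 2 * (3 * r) = 6 * r by ring,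
      Real.mul_rpow (by norm_num) hr.le, Real.mul_rpow (by norm_num) hr.le,
      Real.mul_rpow zero_le_two hr.le, Real.rpow_neg hr.le γ]
    field_simp
  set κ := (3 * r / 2) ^ γ * (2 * (3 * r)) ^ β / (1 - 2⁻¹ ^ (β + γ))
  have hinner : ∀ y ∈ ball x₀ (2 * r),
      ∫⁻ x in ball x₀ r, ENNReal.ofReal (dist x y ^ γ) ∂μ ≤ A * ENNReal.ofReal κ :=
    fun y hy => (lintegral_mono_set (ball_subset_ball' (by linarith [mem_ball'.1 hy]))).trans
      (setLIntegral_ball_rpow_dist_le (by positivity) hγ hβγ (hμ y))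
  rw [lintegral_lintegral_swap (measurable_dist.pow_const γ).ennreal_ofReal.aemeasurable]
  calc ∫⁻ y in ball x₀ (2 * r), ∫⁻ x in ball x₀ r, ENNReal.ofReal (dist x y ^ γ) ∂μ ∂ν
      ≤ ∫⁻ _ in ball x₀ (2 * r), A * ENNReal.ofReal κ ∂ν :=
        setLIntegral_mono measurable_const hinner
    _ = A * ENNReal.ofReal κ * ν (ball x₀ (2 * r)) := setLIntegral_const _ _
    _ ≤ A * ENNReal.ofReal κ * (M * ENNReal.ofReal ((2 * r) ^ (-γ))) := by gcongr
    _ = _ := by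
        rw [mul_mul_mul_comm, ← ENNReal.ofReal_mul (by positivity), hκ,
          ENNReal.ofReal_mul (by positivity)]
        ring

lemma setLIntegral_abs_sub_average_le {X : Type*} [MeasurableSpace X] {μ : Measure X}
    {s : Set X} {g : X → ℝ} (hμs : μ s ≠ ∞) (hg : IntegrableOn g s μ) (c : ℝ) :
    ∫⁻ x in s, ENNReal.ofReal |g x - (μ s).toReal⁻¹ * ∫ y in s, g y ∂μ| ∂μ ≤
      2 * ∫⁻ x in s, ENNReal.ofReal |g x - c| ∂μ := by
  set m := (μ s).toReal⁻¹ * ∫ y in s, g y ∂μ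
  have hcm : ENNReal.ofReal |c - m| * μ s ≤ ∫⁻ x in s, ENNReal.ofReal |g x - c| ∂μ := by
    rcases eq_or_ne (μ s).toReal 0 with h | h
    · simp [(ENNReal.toReal_eq_zero_iff _).1 h |>.resolve_right hμs]
    have hmean : |c - m| * (μ s).toReal = |∫ x in s, (c - g x) ∂μ| := by
      have hc : IntegrableOn (fun _ => c) s μ := integrableOn_const hμs
      rw [integral_sub hc hg, setIntegral_const, smul_eq_mul,
        ← abs_of_nonneg (ENNReal.toReal_nonneg (a := μ s)), ← abs_mul, measureReal_def]
      congr 1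
      simp only [m]
      field_simp
    calc ENNReal.ofReal |c - m| * μ s = ENNReal.ofReal (|c - m| * (μ s).toReal) := by
          rw [ENNReal.ofReal_mul (abs_nonneg _), ENNReal.ofReal_toReal hμs]
      _ = ‖∫ x in s, (c - g x) ∂μ‖ₑ := by rw [hmean, Real.enorm_eq_ofReal_abs]
      _ ≤ ∫⁻ x in s, ‖c - g x‖ₑ ∂μ := enorm_integral_le_lintegral_enorm _
      _ = ∫⁻ x in s, ENNReal.ofReal |g x - c| ∂μ := by
          simp_rw [Real.enorm_eq_ofReal_abs, abs_sub_comm]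
  calc ∫⁻ x in s, ENNReal.ofReal |g x - m| ∂μ
      ≤ ∫⁻ x in s, (ENNReal.ofReal |g x - c| + ENNReal.ofReal |c - m|) ∂μ :=
        lintegral_mono fun x =>
          (ENNReal.ofReal_le_ofReal (abs_sub_le _ _ _)).trans ENNReal.ofReal_add_le
    _ = ∫⁻ x in s, ENNReal.ofReal |g x - c| ∂μ + ENNReal.ofReal |c - m| * μ s := by
        rw [lintegral_add_right _ measurable_const, setLIntegral_const]
    _ ≤ 2 * ∫⁻ x in s, ENNReal.ofReal |g x - c| ∂μ := by
        rw [two_mul]; gcongr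

lemma enorm_integral_sub_setIntegral_compl_le {X E : Type*} [MeasurableSpace X]
    [NormedAddCommGroup E] [NormedSpace ℝ E] {μ : Measure X} {S : Set X} (hS : MeasurableSet S)
    {h₁ h₀ : X → E} (hm : AEStronglyMeasurable h₁ μ)
    (hiff : IntegrableOn h₁ Sᶜ μ ↔ IntegrableOn h₀ Sᶜ μ) :
    ‖∫ x, h₁ x ∂μ - ∫ x in Sᶜ, h₀ x ∂μ‖ₑ ≤
      ∫⁻ x in S, ‖h₁ x‖ₑ ∂μ + ∫⁻ x in Sᶜ, ‖h₁ x - h₀ x‖ₑ ∂μ := by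
  by_cases h₀int : IntegrableOn h₀ Sᶜ μ
  swap
  · have : ¬ Integrable h₁ μ := fun h => h₀int (hiff.1 h.integrableOn)
    simp [integral_undef this, integral_undef h₀int]
  by_cases h₁int : IntegrableOn h₁ S μ
  swap
  · have : ∫⁻ x in S, ‖h₁ x‖ₑ ∂μ = ∞ :=
      not_lt_top_iff.1 fun h => h₁int ⟨hm.restrict, h⟩
    simp [this]
  have h₁int' : Integrable h₁ μ := by
    simpa using h₁int.union (hiff.2 h₀int)
  rw [← integral_add_compl hS h₁int', add_sub_assoc, ← integral_sub (hiff.2 h₀int) h₀int]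
  exact (enorm_add_le _ _).trans
    (add_le_add (enorm_integral_le_lintegral_enorm _) (enorm_integral_le_lintegral_enorm _))

lemma setLIntegral_enorm_mul_eq_setLIntegral_withDensity {X : Type*} [MeasurableSpace X]
    {μ : Measure X} {f φ : X → ℝ} (hf : AEStronglyMeasurable f μ) (hφ : Measurable φ)
    {S : Set X} (hS : MeasurableSet S) :
    ∫⁻ y in S, ‖φ y * f y‖ₑ ∂μ =
      ∫⁻ y in S, ENNReal.ofReal |φ y| ∂μ.withDensity fun y => ‖f y‖ₑ := by
  have hφ' : Measurable fun y => ENNReal.ofReal |φ y| := (measurable_abs.comp hφ).ennreal_ofReal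
  rw [setLIntegral_withDensity_eq_lintegral_mul₀ hf.enorm hφ'.aemeasurable hS]
  simp_rw [Pi.mul_apply, enorm_mul, Real.enorm_eq_ofReal_abs (φ _), mul_comm]

lemma measure_ball_le_of_memSupport {n : ℕ} {β : ℝ} {μ : Measure (En n)} {x : En n}
    (hx : memSupport μ x) {s : ℝ} (hs : 0 < s) :
    μ (ball x s) ≤ growthConst n β μ * ENNReal.ofReal (s ^ β) :=
  le_mul_ofReal_rpow_of_ofReal_rpow_neg_mul_le hs
    (le_iSup₂_of_le x hx (le_iSup₂_of_le s hs le_rfl))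

lemma measure_ball_le_growthConst {n : ℕ} {β : ℝ} {μ : Measure (En n)} (y : En n) {s : ℝ}
    (hs : 0 < s) :
    μ (ball y s) ≤ growthConst n β μ * ENNReal.ofReal (2 ^ β) * ENNReal.ofReal (s ^ β) := by
  rcases eq_zero_or_pos (μ (ball y s)) with h | h
  · simp [h]
  obtain ⟨z, hzy, hz⟩ := Measure.nonempty_inter_support_of_pos h
  have hzs : memSupport μ z := fun r hr =>
    (Measure.mem_support_iff_forall z).1 hz _ (ball_mem_nhds z hr)
  calc μ (ball y s) ≤ μ (ball z (2 * s)) :=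
        measure_mono (ball_subset_ball' (by rw [dist_comm]; linarith [mem_ball.1 hzy]))
    _ ≤ _ := measure_ball_le_of_memSupport hzs (by positivity)
    _ = _ := by rw [Real.mul_rpow zero_le_two hs.le, ENNReal.ofReal_mul (by positivity), mul_assoc]

lemma rpow_le_two_rpow_neg_mul_rpow {a b γ : ℝ} (hγ : γ ≤ 0) (ha : 0 < a) (hab : a ≤ 2 * b) :
    b ^ γ ≤ 2 ^ (-γ) * a ^ γ :=
  calc b ^ γ ≤ (a / 2) ^ γ := Real.rpow_le_rpow_of_nonpos (by positivity) (by linarith) hγ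
    _ = 2 ^ (-γ) * a ^ γ := by
        rw [Real.div_rpow ha.le zero_le_two, Real.rpow_neg zero_le_two, div_eq_inv_mul]

lemma abs_rpow_sub_rpow_le {γ m a b : ℝ} (hγ : γ ≤ 0) (hm : 0 < m) (ha : m ≤ a) (hb : m ≤ b) :
    |a ^ γ - b ^ γ| ≤ -γ * m ^ (γ - 1) * |a - b| := by
  have key := (convex_Ici m).norm_image_sub_le_of_norm_hasDerivWithin_le
    (f := fun t : ℝ => t ^ γ) (f' := fun t => γ * t ^ (γ - 1)) (C := -γ * m ^ (γ - 1))
    (fun t ht => (Real.hasDerivAt_rpow_const (Or.inl (hm.trans_le ht).ne')).hasDerivWithinAt)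
    (fun t ht => by
      have ht0 : 0 < t := hm.trans_le ht
      rw [Real.norm_eq_abs, abs_mul, abs_of_nonpos hγ, abs_of_nonneg (by positivity)]
      exact mul_le_mul_of_nonneg_left
        (Real.rpow_le_rpow_of_nonpos hm ht (by linarith)) (by linarith))
    hb ha
  simpa [Real.norm_eq_abs] using key

section RieszKernel

variable {E : Type*} [NormedAddCommGroup E] {x₀ x y : E} {r γ : ℝ}

lemma two_mul_le_norm_sub_and_abs_norm_sub_sub_norm_sub_le (hx : x ∈ ball x₀ r)
    (hy : y ∉ ball x₀ (2 * r)) : 2 * r ≤ ‖x₀ - y‖ ∧ |‖x - y‖ - ‖x₀ - y‖| ≤ r := by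
  rw [mem_ball, dist_eq_norm] at hx
  rw [mem_ball, dist_eq_norm', not_lt] at hy
  refine ⟨hy, (abs_norm_sub_norm_le (x - y) (x₀ - y)).trans ?_⟩
  rw [sub_sub_sub_cancel_right]
  exact hx.le

variable [MeasurableSpace E] [OpensMeasurableSpace E]

lemma integrableOn_compl_ball_rpow_norm_sub_mul_iff {μ : Measure E} {f : E → ℝ}
    (hf : AEStronglyMeasurable f μ) (hγ : γ ≤ 0) (hr : 0 < r) (hx : x ∈ ball x₀ r) :
    IntegrableOn (fun y => ‖x - y‖ ^ γ * f y) (ball x₀ (2 * r))ᶜ μ ↔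
      IntegrableOn (fun y => ‖x₀ - y‖ ^ γ * f y) (ball x₀ (2 * r))ᶜ μ := by
  have transfer : ∀ z w : E, (∀ y ∉ ball x₀ (2 * r), 0 < ‖z - y‖ ∧ ‖z - y‖ ≤ 2 * ‖w - y‖) →
      IntegrableOn (fun y => ‖z - y‖ ^ γ * f y) (ball x₀ (2 * r))ᶜ μ →
      IntegrableOn (fun y => ‖w - y‖ ^ γ * f y) (ball x₀ (2 * r))ᶜ μ := by
    intro z w hzw h
    refine (h.const_mul (2 ^ (-γ))).mono
      (((continuous_const.sub continuous_id).norm.measurable.pow_const γ).aestronglyMeasurable.mul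
        hf.restrict) (ae_restrict_of_forall_mem measurableSet_ball.compl fun y hy => ?_)
    obtain ⟨hpos, hle⟩ := hzw y hy
    simp only [norm_mul, Real.norm_of_nonneg (Real.rpow_nonneg (norm_nonneg _) _),
      Real.norm_of_nonneg (Real.rpow_nonneg zero_le_two _), ← mul_assoc]
    gcongr
    exact rpow_le_two_rpow_neg_mul_rpow hγ hpos hle
  have hgeom := fun y (hy : y ∉ ball x₀ (2 * r)) =>
    two_mul_le_norm_sub_and_abs_norm_sub_sub_norm_sub_le hx hy
  constructor
  · refine transfer x x₀ fun y hy => ?_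
    obtain ⟨h2r, hdiff⟩ := hgeom y hy
    constructor <;> linarith [abs_le.1 hdiff]
  · refine transfer x₀ x fun y hy => ?_
    obtain ⟨h2r, hdiff⟩ := hgeom y hy
    constructor <;> linarith [abs_le.1 hdiff]

lemma setLIntegral_compl_ball_abs_rpow_sub_rpow_le {ν : Measure E} {M : ℝ≥0∞} (hγ : γ ≤ 0)
    (hr : 0 < r) (hx : x ∈ ball x₀ r)
    (hν : ∀ s, 0 < s → ν (ball x₀ s) ≤ M * ENNReal.ofReal (s ^ (-γ))) :
    ∫⁻ y in (ball x₀ (2 * r))ᶜ, ENNReal.ofReal |‖x - y‖ ^ γ - ‖x₀ - y‖ ^ γ| ∂ν ≤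
      ENNReal.ofReal (-2 * γ * 4 ^ (-γ)) * M := by
  have hc : 0 ≤ -γ * 2 ^ (1 - γ) * r :=
    mul_nonneg (mul_nonneg (neg_nonneg.2 hγ) (Real.rpow_nonneg zero_le_two _)) hr.le
  have hpt : ∀ y ∈ (ball x₀ (2 * r))ᶜ, ENNReal.ofReal |‖x - y‖ ^ γ - ‖x₀ - y‖ ^ γ| ≤
      ENNReal.ofReal (-γ * 2 ^ (1 - γ) * r) * ENNReal.ofReal (dist y x₀ ^ (γ - 1)) := by
    intro y hy
    obtain ⟨h2r, hdiff⟩ := two_mul_le_norm_sub_and_abs_norm_sub_sub_norm_sub_le hx hy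
    rw [← ENNReal.ofReal_mul hc]
    refine ENNReal.ofReal_le_ofReal ?_
    calc |‖x - y‖ ^ γ - ‖x₀ - y‖ ^ γ|
        ≤ -γ * (‖x₀ - y‖ / 2) ^ (γ - 1) * |‖x - y‖ - ‖x₀ - y‖| :=
          abs_rpow_sub_rpow_le hγ (by linarith) (by linarith [abs_le.1 hdiff]) (by linarith)
      _ ≤ -γ * (‖x₀ - y‖ / 2) ^ (γ - 1) * r := by
          gcongr
          exact mul_nonneg (neg_nonneg.2 hγ) (Real.rpow_nonneg (by positivity) _)
      _ = -γ * 2 ^ (1 - γ) * r * dist y x₀ ^ (γ - 1) := by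
          rw [Real.div_rpow (norm_nonneg _) zero_le_two, show (1:ℝ) - γ = -(γ - 1) by ring,
            Real.rpow_neg zero_le_two, dist_eq_norm']
          ring
  have hfar := setLIntegral_compl_ball_rpow_dist_le (γ := γ - 1) (by positivity : 0 < 2 * r)
    (by linarith) (by linarith) hν
  have h2 : (2:ℝ) ^ (1 - γ) * 2 ^ (γ - 1) = 1 := by
    rw [← Real.rpow_add two_pos]; norm_num
  have hr1 : r * r ^ (γ - 1) * r ^ (-γ) = 1 := by
    rw [Real.rpow_sub_one hr.ne', Real.rpow_neg hr.le]
    field_simp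
  calc ∫⁻ y in (ball x₀ (2 * r))ᶜ, ENNReal.ofReal |‖x - y‖ ^ γ - ‖x₀ - y‖ ^ γ| ∂ν
      ≤ ∫⁻ y in (ball x₀ (2 * r))ᶜ,
          ENNReal.ofReal (-γ * 2 ^ (1 - γ) * r) * ENNReal.ofReal (dist y x₀ ^ (γ - 1)) ∂ν :=
        setLIntegral_mono' measurableSet_ball.compl hpt
    _ = ENNReal.ofReal (-γ * 2 ^ (1 - γ) * r) *
          ∫⁻ y in (ball x₀ (2 * r))ᶜ, ENNReal.ofReal (dist y x₀ ^ (γ - 1)) ∂ν :=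
        lintegral_const_mul' _ _ ENNReal.ofReal_ne_top
    _ ≤ ENNReal.ofReal (-γ * 2 ^ (1 - γ) * r) * (M * ENNReal.ofReal ((2 * r) ^ (γ - 1) *
          (2 * (2 * r)) ^ (-γ) / (1 - 2 ^ (-γ + (γ - 1))))) := by gcongr
    _ = ENNReal.ofReal (-2 * γ * 4 ^ (-γ)) * M := by
        rw [mul_left_comm, ← ENNReal.ofReal_mul hc, mul_comm]
        congr 2
        rw [show -γ + (γ - 1) = -1 by ring, Real.rpow_neg_one, show 2 * (2 * r) = 4 * r by ring,
          Real.mul_rpow zero_le_two hr.le, Real.mul_rpow (by norm_num) hr.le]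
        calc _ = -γ * 4 ^ (-γ) * (2 ^ (1 - γ) * 2 ^ (γ - 1)) * (r * r ^ (γ - 1) * r ^ (-γ)) /
              (1 - 2⁻¹) := by ring
          _ = _ := by rw [h2, hr1]; ring

end RieszKernel

lemma enorm_rieszR_sub_le {n : ℕ} {α : ℝ} (hαn : α < n) {f : En n → ℝ}
    (hf : AEStronglyMeasurable f volume) {x₀ x : En n} {r : ℝ} (hr : 0 < r)
    (hx : x ∈ ball x₀ r) :
    ‖rieszR n α f x - ∫ y in (ball x₀ (2 * r))ᶜ, ‖x₀ - y‖ ^ (α - n) * f y‖ₑ ≤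
      ∫⁻ y in ball x₀ (2 * r), ENNReal.ofReal (dist x y ^ (α - n))
          ∂(volume.withDensity fun y => ‖f y‖ₑ) +
        ∫⁻ y in (ball x₀ (2 * r))ᶜ, ENNReal.ofReal |‖x - y‖ ^ (α - n) - ‖x₀ - y‖ ^ (α - n)|
          ∂(volume.withDensity fun y => ‖f y‖ₑ) := by
  have hk : ∀ z : En n, Measurable fun y => ‖z - y‖ ^ (α - n) :=
    fun z => (continuous_const.sub continuous_id).norm.measurable.pow_const _
  refine (enorm_integral_sub_setIntegral_compl_le (h₁ := fun y => ‖x - y‖ ^ (α - n) * f y)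
    measurableSet_ball
    ((hk x).aestronglyMeasurable.mul hf)
    (integrableOn_compl_ball_rpow_norm_sub_mul_iff hf (by linarith) hr hx)).trans_eq ?_
  simp_rw [← sub_mul]
  rw [setLIntegral_enorm_mul_eq_setLIntegral_withDensity hf (hk x) measurableSet_ball,
    setLIntegral_enorm_mul_eq_setLIntegral_withDensity
      (φ := fun y => ‖x - y‖ ^ (α - n) - ‖x₀ - y‖ ^ (α - n)) hf ((hk x).sub (hk x₀))
      measurableSet_ball.compl]
  congr 1
  refine lintegral_congr fun y => ?_
  rw [abs_of_nonneg (by positivity), dist_eq_norm]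

lemma withDensity_ball_le_fracMax {n : ℕ} {α : ℝ} (f : En n → ℝ) (x : En n) {s : ℝ}
    (hs : 0 < s) :
    volume.withDensity (fun y => ‖f y‖ₑ) (ball x s) ≤
      fracMax n α (fun y => ‖f y‖ₑ) x * ENNReal.ofReal (s ^ (-(α - n))) := by
  rw [withDensity_apply _ measurableSet_ball]
  exact le_mul_ofReal_rpow_of_ofReal_rpow_neg_mul_le hs
    (by rw [neg_neg]; exact le_iSup₂_of_le s hs le_rfl)

-- local-part constant (with the `2 ^ β` lost by centring balls off `spt μ`) plus far-part one
def rieszOscConst (n : ℕ) (α β : ℝ) : ℝ :=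
  (3 / 2) ^ (α - n) * 6 ^ β * 2 ^ (-(α - n)) / (1 - 2⁻¹ ^ (β + (α - n))) * 2 ^ β +
    -2 * (α - n) * 4 ^ (-(α - n))

lemma rieszOscConst_pos {n : ℕ} {α β : ℝ} (hαn : α < n) (hβ : (n : ℝ) - α < β) :
    0 < rieszOscConst n α β := by
  have hq : 0 < 1 - (2⁻¹ : ℝ) ^ (β + (α - n)) :=
    sub_pos.2 (Real.rpow_lt_one (by norm_num) (by norm_num) (by linarith))
  have : 0 < -2 * (α - n) := by linarith
  unfold rieszOscConst
  positivity

lemma setLIntegral_ball_abs_rieszR_sub_le {n : ℕ} {α β : ℝ} (hαn : α < n)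
    (hβ : (n : ℝ) - α < β) {μ : Measure (En n)} (hG : growthConst n β μ ≠ ∞) {f : En n → ℝ}
    (hf : AEStronglyMeasurable f volume) {x₀ : En n} (hx₀ : memSupport μ x₀) {r : ℝ}
    (hr : 0 < r) :
    ∫⁻ x in ball x₀ r,
        ENNReal.ofReal |rieszR n α f x - ∫ y in (ball x₀ (2 * r))ᶜ, ‖x₀ - y‖ ^ (α - n) * f y| ∂μ ≤
      ENNReal.ofReal (rieszOscConst n α β) * growthConst n β μ *
        fracMax n α (fun y => (‖f y‖₊ : ℝ≥0∞)) x₀ * ENNReal.ofReal (r ^ β) := by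
  have hγ : α - n < 0 := by linarith
  set G := growthConst n β μ
  set M := fracMax n α (fun y => (‖f y‖₊ : ℝ≥0∞)) x₀
  set ν := volume.withDensity fun y => ‖f y‖ₑ
  set C₁ : ℝ := (3 / 2) ^ (α - n) * 6 ^ β * 2 ^ (-(α - n)) / (1 - 2⁻¹ ^ (β + (α - n)))
  set C₂ : ℝ := -2 * (α - n) * 4 ^ (-(α - n))
  set Φ := fun x => ∫⁻ y in ball x₀ (2 * r), ENNReal.ofReal (dist x y ^ (α - n)) ∂ν
  have hν : ∀ s, 0 < s → ν (ball x₀ s) ≤ M * ENNReal.ofReal (s ^ (-(α - n))) :=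
    fun s hs => withDensity_ball_le_fracMax f x₀ hs
  have hfar : ∀ x ∈ ball x₀ r,
      ENNReal.ofReal |rieszR n α f x - ∫ y in (ball x₀ (2 * r))ᶜ, ‖x₀ - y‖ ^ (α - n) * f y| ≤
        Φ x + ENNReal.ofReal C₂ * M := fun x hx => by
    rw [← Real.enorm_eq_ofReal_abs]
    exact (enorm_rieszR_sub_le hαn hf hr hx).trans
      (add_le_add le_rfl (setLIntegral_compl_ball_abs_rpow_sub_rpow_le hγ.le hr hx hν))
  have hlocal : ∫⁻ x in ball x₀ r, Φ x ∂μ ≤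
      ENNReal.ofReal C₁ * (G * ENNReal.ofReal (2 ^ β)) * M * ENNReal.ofReal (r ^ β) :=
    lintegral_ball_setLIntegral_ball_rpow_dist_le (ENNReal.mul_ne_top hG ENNReal.ofReal_ne_top)
      hγ (by linarith) hr (fun z s hs => measure_ball_le_growthConst z hs) (hν _ (by positivity))
  have hC₁ : 0 ≤ C₁ := div_nonneg (by positivity)
    (sub_nonneg.2 (Real.rpow_le_one (by norm_num) (by norm_num) (by linarith)))
  have hC₂ : 0 ≤ C₂ := mul_nonneg (by linarith) (by positivity)
  calc _ ≤ ∫⁻ x in ball x₀ r, (Φ x + ENNReal.ofReal C₂ * M) ∂μ :=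
        setLIntegral_mono' measurableSet_ball hfar
    _ = ∫⁻ x in ball x₀ r, Φ x ∂μ + ENNReal.ofReal C₂ * M * μ (ball x₀ r) := by
        rw [lintegral_add_right _ measurable_const, setLIntegral_const]
    _ ≤ ENNReal.ofReal C₁ * (G * ENNReal.ofReal (2 ^ β)) * M * ENNReal.ofReal (r ^ β) +
          ENNReal.ofReal C₂ * M * (G * ENNReal.ofReal (r ^ β)) :=
        add_le_add hlocal (by gcongr; exact measure_ball_le_of_memSupport hx₀ hr)
    _ = _ := by
        rw [rieszOscConst, ENNReal.ofReal_add (by positivity) hC₂,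
          ENNReal.ofReal_mul hC₁]
        ring

theorem sharpMaxC_rieszR_le_fracMax_general (n : ℕ) (α β : ℝ) (hαn : α < n)
    (hβ1 : (n : ℝ) - α < β) :
    ∃ C : ℝ, 0 < C ∧ ∀ μ : Measure (En n), growthConst n β μ < ∞ →
      ∀ f : En n → ℝ, LocallyIntegrable f volume →
        LocallyIntegrable (rieszR n α f) μ →
        ∀ x : En n, memSupport μ x →
          sharpMaxC n β μ (rieszR n α f) x ≤
            ENNReal.ofReal C * growthConst n β μ *
              fracMax n α (fun y => (‖f y‖₊ : ℝ≥0∞)) x := by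
  refine ⟨2 * rieszOscConst n α β, mul_pos two_pos (rieszOscConst_pos hαn hβ1), ?_⟩
  intro μ hG f hf hg x₀ hx₀
  set K := rieszOscConst n α β
  set M := fracMax n α (fun y => (‖f y‖₊ : ℝ≥0∞)) x₀
  refine iSup₂_le fun r hr => ?_
  have hμB : μ (ball x₀ r) ≠ ∞ :=
    ne_top_of_le_ne_top (by finiteness) (measure_ball_le_of_memSupport (β := β) hx₀ hr)
  have hgB : IntegrableOn (rieszR n α f) (ball x₀ r) μ :=
    (hg.integrableOn_isCompact (isCompact_closedBall x₀ r)).mono_set ball_subset_closedBall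
  calc _ ≤ ENNReal.ofReal (r ^ (-β)) *
        (2 * (ENNReal.ofReal K * growthConst n β μ * M * ENNReal.ofReal (r ^ β))) := by
        gcongr
        exact (setLIntegral_abs_sub_average_le hμB hgB _).trans (by
          gcongr
          exact setLIntegral_ball_abs_rieszR_sub_le hαn hβ1 hG.ne hf.aestronglyMeasurable hx₀ hr)
    _ = ENNReal.ofReal (2 * K) * growthConst n β μ * M *
          (ENNReal.ofReal (r ^ (-β)) * ENNReal.ofReal (r ^ β)) := by
        rw [ENNReal.ofReal_mul zero_le_two, ENNReal.ofReal_ofNat]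
        ring
    _ = _ := by rw [ofReal_rpow_neg_mul_ofReal_rpow hr, mul_one]

/-- pointwise bound `M̄^♯ I_α f ≤ C ⟦μ⟧_β M_α f` on the support of `μ`. -/
theorem sharpMaxC_rieszR_le_fracMax (n : ℕ) (α β : ℝ) (hα0 : 0 < α) (hαn : α < n)
    (hβ1 : (n : ℝ) - α < β) (hβn : β ≤ n) :
    ∃ C : ℝ, 0 < C ∧ ∀ μ : Measure (En n), growthConst n β μ < ∞ →
      ∀ f : En n → ℝ, LocallyIntegrable f volume →
        LocallyIntegrable (rieszR n α f) μ →
        ∀ x : En n, memSupport μ x →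
          sharpMaxC n β μ (rieszR n α f) x ≤
            ENNReal.ofReal C * growthConst n β μ *
              fracMax n α (fun y => (‖f y‖₊ : ℝ≥0∞)) x :=
  sharpMaxC_rieszR_le_fracMax_general n α β hαn hβ1
end
end
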